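/- arXiv:1802.10470 — 2 statements merged into one kernel-verified Lean document; each statement's English description precedes it below -/
import Mathlib

section
/- On M = U × {(z,t) ∈ ℝ² : z < 0} with U ⊂ ℝ² open, let h, H : U → ℝ be positive smooth functions, and define the 1-forms θ₁ = z·h dx, θ₂ = z·h dy and θ₄ = dz − sin(t/2)·H dx − cos(t/2)·H dy. Then dθ₄ = E₂(ln α)·θ₁∧θ₃ − E₁(ln α)·θ₂∧θ₃, where α = −2/z, θ₃ = −(z/2)dt + (cos(t/2)H + z l₂)dx + (−sin(t/2)H + z n₂)dy with l₂ = −(ln H)_y, n₂ = (ln H)_x, and E₁(ln α) = −sin(t/2)H/(z²h), E₂(ln α) = −cos(t/2)H/(z²h). -/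
/-- Partial derivative `∂ᵢ f` on `ℝ⁴` with coordinates `(x,y,z,t)` indexed `0,1,2,3`. -/
noncomputable def pd (i : Fin 4) (f : (Fin 4 → ℝ) → ℝ) (p : Fin 4 → ℝ) : ℝ :=
  fderiv ℝ f p (Pi.single i 1)

/-- Partial derivative `∂ᵢ f` on `ℝ²` with coordinates `(x,y)`. -/
noncomputable def pd2 (i : Fin 2) (f : (Fin 2 → ℝ) → ℝ) (q : Fin 2 → ℝ) : ℝ :=
  fderiv ℝ f q (Pi.single i 1)

/-- Projection `(x,y,z,t) ↦ (x,y)`. -/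
def proj (p : Fin 4 → ℝ) : Fin 2 → ℝ := ![p 0, p 1]

/-- Exterior derivative of a 1-form: `(dθ)ᵢⱼ = ∂ᵢθⱼ - ∂ⱼθᵢ`. -/
noncomputable def d1 (θ : Fin 4 → (Fin 4 → ℝ) → ℝ) (i j : Fin 4) (p : Fin 4 → ℝ) : ℝ :=
  pd i (θ j) p - pd j (θ i) p

/-- Exterior derivative of a 2-form: `(dΩ)ᵢⱼₖ = ∂ᵢΩⱼₖ - ∂ⱼΩᵢₖ + ∂ₖΩᵢⱼ`. -/
noncomputable def d2 (Ω : Fin 4 → Fin 4 → (Fin 4 → ℝ) → ℝ) (i j k : Fin 4)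
    (p : Fin 4 → ℝ) : ℝ :=
  pd i (Ω j k) p - pd j (Ω i k) p + pd k (Ω i j) p

/-- Wedge of two 1-forms: `(θ∧σ)ᵢⱼ = θᵢσⱼ - θⱼσᵢ`. -/
def w11 (θ σ : Fin 4 → (Fin 4 → ℝ) → ℝ) (i j : Fin 4) (p : Fin 4 → ℝ) : ℝ :=
  θ i p * σ j p - θ j p * σ i p

/-- Wedge of a 1-form with a 2-form: `(θ∧Ω)ᵢⱼₖ = θᵢΩⱼₖ - θⱼΩᵢₖ + θₖΩᵢⱼ`. -/
def w12 (θ : Fin 4 → (Fin 4 → ℝ) → ℝ) (Ω : Fin 4 → Fin 4 → (Fin 4 → ℝ) → ℝ)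
    (i j k : Fin 4) (p : Fin 4 → ℝ) : ℝ :=
  θ i p * Ω j k p - θ j p * Ω i k p + θ k p * Ω i j p

/-- `l₂ = -(ln H)_y`. -/
noncomputable def l₂ (H : (Fin 2 → ℝ) → ℝ) (q : Fin 2 → ℝ) : ℝ :=
  -pd2 1 (fun s => Real.log (H s)) q

/-- `n₂ = (ln H)_x`. -/
noncomputable def n₂ (H : (Fin 2 → ℝ) → ℝ) (q : Fin 2 → ℝ) : ℝ :=
  pd2 0 (fun s => Real.log (H s)) q

/-- `θ₁ = z·h dx`. -/
noncomputable def θ₁ (h : (Fin 2 → ℝ) → ℝ) : Fin 4 → (Fin 4 → ℝ) → ℝ :=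
  ![fun p => p 2 * h (proj p), fun _ => 0, fun _ => 0, fun _ => 0]

/-- `θ₂ = z·h dy`. -/
noncomputable def θ₂ (h : (Fin 2 → ℝ) → ℝ) : Fin 4 → (Fin 4 → ℝ) → ℝ :=
  ![fun _ => 0, fun p => p 2 * h (proj p), fun _ => 0, fun _ => 0]

/-- `θ₃ = -(z/2)dt + (cos(t/2)H + z l₂)dx + (-sin(t/2)H + z n₂)dy`. -/
noncomputable def θ₃ (H : (Fin 2 → ℝ) → ℝ) : Fin 4 → (Fin 4 → ℝ) → ℝ :=
  ![fun p => Real.cos (p 3 / 2) * H (proj p) + p 2 * l₂ H (proj p),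
    fun p => -(Real.sin (p 3 / 2) * H (proj p)) + p 2 * n₂ H (proj p),
    fun _ => 0,
    fun p => -(p 2) / 2]

/-- `θ₄ = dz - sin(t/2)H dx - cos(t/2)H dy`. -/
noncomputable def θ₄ (H : (Fin 2 → ℝ) → ℝ) : Fin 4 → (Fin 4 → ℝ) → ℝ :=
  ![fun p => -(Real.sin (p 3 / 2) * H (proj p)),
    fun p => -(Real.cos (p 3 / 2) * H (proj p)),
    fun _ => 1, fun _ => 0]

noncomputable def projL : (Fin 4 → ℝ) →L[ℝ] (Fin 2 → ℝ) :=
  ContinuousLinearMap.pi ![ContinuousLinearMap.proj 0, ContinuousLinearMap.proj 1]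

lemma projL_eq (p : Fin 4 → ℝ) : projL p = proj p := by
  funext j
  fin_cases j <;> simp [projL, proj]

lemma key (f : ℝ → ℝ) (f' : ℝ) (H : (Fin 2 → ℝ) → ℝ) (p : Fin 4 → ℝ)
    (hf : HasDerivAt f f' (p 3)) (hHd : DifferentiableAt ℝ H (proj p)) :
    HasFDerivAt (fun p => f (p 3) * H (proj p))
      ((f (p 3)) • ((fderiv ℝ H (proj p)).comp projL) +
        (H (proj p)) • (f' • (ContinuousLinearMap.proj 3 : (Fin 4 → ℝ) →L[ℝ] ℝ))) p := by
  have h1 : HasFDerivAt (fun p : Fin 4 → ℝ => f (p 3))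
      (f' • (ContinuousLinearMap.proj 3 : (Fin 4 → ℝ) →L[ℝ] ℝ)) p :=
    hf.comp_hasFDerivAt p
      ((ContinuousLinearMap.proj 3 : (Fin 4 → ℝ) →L[ℝ] ℝ).hasFDerivAt (x := p))
  have h2 : HasFDerivAt (fun p : Fin 4 → ℝ => H (proj p))
      ((fderiv ℝ H (proj p)).comp projL) p := by
    have hHd2 : HasFDerivAt H (fderiv ℝ H (proj p)) (projL p) := by
      rw [projL_eq]; exact hHd.hasFDerivAt
    have h2' := hHd2.comp p (projL.hasFDerivAt (x := p))
    have he : (H ∘ ⇑projL) = fun p => H (proj p) := by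
      funext q; simp [projL_eq]
    rwa [he] at h2'
  exact h1.mul h2

lemma projL_single0 : projL (Pi.single 0 1) = (Pi.single 0 1 : Fin 2 → ℝ) := by
  funext j; fin_cases j <;> simp [projL]

lemma projL_single1 : projL (Pi.single 1 1) = (Pi.single 1 1 : Fin 2 → ℝ) := by
  funext j; fin_cases j <;> simp [projL]

lemma projL_single2 : projL (Pi.single 2 1) = (0 : Fin 2 → ℝ) := by
  funext j; fin_cases j <;> simp [projL]

lemma projL_single3 : projL (Pi.single 3 1) = (0 : Fin 2 → ℝ) := by
  funext j; fin_cases j <;> simp [projL]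

lemma pd_key (f : ℝ → ℝ) (f' : ℝ) (H : (Fin 2 → ℝ) → ℝ) (p : Fin 4 → ℝ)
    (hf : HasDerivAt f f' (p 3)) (hHd : DifferentiableAt ℝ H (proj p)) (i : Fin 4) :
    pd i (fun p => f (p 3) * H (proj p)) p =
      f (p 3) * (fderiv ℝ H (proj p)) (projL (Pi.single i 1)) +
        H (proj p) * (f' * ((Pi.single i 1 : Fin 4 → ℝ) 3)) := by
  rw [pd, (key f f' H p hf hHd).fderiv]
  simp

lemma pd0_key (f : ℝ → ℝ) (f' : ℝ) (H : (Fin 2 → ℝ) → ℝ) (p : Fin 4 → ℝ)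
    (hf : HasDerivAt f f' (p 3)) (hHd : DifferentiableAt ℝ H (proj p)) :
    pd 0 (fun p => f (p 3) * H (proj p)) p = f (p 3) * pd2 0 H (proj p) := by
  rw [pd_key f f' H p hf hHd 0, projL_single0]
  simp [pd2]

lemma pd1_key (f : ℝ → ℝ) (f' : ℝ) (H : (Fin 2 → ℝ) → ℝ) (p : Fin 4 → ℝ)
    (hf : HasDerivAt f f' (p 3)) (hHd : DifferentiableAt ℝ H (proj p)) :
    pd 1 (fun p => f (p 3) * H (proj p)) p = f (p 3) * pd2 1 H (proj p) := by
  rw [pd_key f f' H p hf hHd 1, projL_single1]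
  simp [pd2]

lemma pd2_key (f : ℝ → ℝ) (f' : ℝ) (H : (Fin 2 → ℝ) → ℝ) (p : Fin 4 → ℝ)
    (hf : HasDerivAt f f' (p 3)) (hHd : DifferentiableAt ℝ H (proj p)) :
    pd 2 (fun p => f (p 3) * H (proj p)) p = 0 := by
  rw [pd_key f f' H p hf hHd 2, projL_single2]
  simp

lemma pd3_key (f : ℝ → ℝ) (f' : ℝ) (H : (Fin 2 → ℝ) → ℝ) (p : Fin 4 → ℝ)
    (hf : HasDerivAt f f' (p 3)) (hHd : DifferentiableAt ℝ H (proj p)) :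
    pd 3 (fun p => f (p 3) * H (proj p)) p = f' * H (proj p) := by
  rw [pd_key f f' H p hf hHd 3, projL_single3]
  simp [mul_comm]

lemma pd_const (i : Fin 4) (c : ℝ) (p : Fin 4 → ℝ) : pd i (fun _ => c) p = 0 := by
  simp [pd]

lemma pd2_log (H : (Fin 2 → ℝ) → ℝ) (q : Fin 2 → ℝ)
    (hHd : DifferentiableAt ℝ H q) (hne : H q ≠ 0) (i : Fin 2) :
    pd2 i (fun s => Real.log (H s)) q = (H q)⁻¹ * pd2 i H q := by
  rw [pd2, (hHd.hasFDerivAt.log hne).fderiv]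
  simp [pd2]

set_option maxHeartbeats 2000000 in
/-- Theorem 1 of the paper, step (2.11) for `θ₄`:
`dθ₄ = E₂(ln α)·θ₁∧θ₃ - E₁(ln α)·θ₂∧θ₃` with `α = -2/z`,
`E₁(ln α) = -sin(t/2)H/(z²h)`, `E₂(ln α) = -cos(t/2)H/(z²h)`. -/
theorem stmt_9 (U : Set (Fin 2 → ℝ)) (hU : IsOpen U)
    (h H : (Fin 2 → ℝ) → ℝ)
    (hh : ∀ q ∈ U, 0 < h q) (hH : ∀ q ∈ U, 0 < H q)
    (hhs : ContDiffOn ℝ (⊤ : ℕ∞) h U) (hHs : ContDiffOn ℝ (⊤ : ℕ∞) H U) :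
    ∀ p : Fin 4 → ℝ, proj p ∈ U → p 2 < 0 → ∀ i j : Fin 4,
      d1 (θ₄ H) i j p =
        (-(Real.cos (p 3 / 2) * H (proj p)) / ((p 2) ^ 2 * h (proj p))) *
          w11 (θ₁ h) (θ₃ H) i j p -
        (-(Real.sin (p 3 / 2) * H (proj p)) / ((p 2) ^ 2 * h (proj p))) *
          w11 (θ₂ h) (θ₃ H) i j p := by
  intro p hq hz i j
  have hHd : DifferentiableAt ℝ H (proj p) :=
    ((hHs.contDiffAt (hU.mem_nhds hq)).differentiableAt (by simp))
  have hH0 : H (proj p) ≠ 0 := (hH _ hq).ne'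
  have hh0 : h (proj p) ≠ 0 := (hh _ hq).ne'
  have hz0 : p 2 ≠ 0 := hz.ne
  have hsin : HasDerivAt (fun t : ℝ => Real.sin (t / 2))
      (Real.cos (p 3 / 2) * (1 / 2)) (p 3) := by
    simpa using ((hasDerivAt_id (p 3)).div_const 2).sin
  have hcos : HasDerivAt (fun t : ℝ => Real.cos (t / 2))
      (-Real.sin (p 3 / 2) * (1 / 2)) (p 3) := by
    simpa using ((hasDerivAt_id (p 3)).div_const 2).cos
  have e0 : θ₄ H 0 = fun p => (fun t : ℝ => -Real.sin (t / 2)) (p 3) * H (proj p) := by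
    funext r; simp [θ₄]
  have e1 : θ₄ H 1 = fun p => (fun t : ℝ => -Real.cos (t / 2)) (p 3) * H (proj p) := by
    funext r; simp [θ₄]
  have e2 : θ₄ H 2 = fun _ => (1 : ℝ) := by funext r; simp [θ₄]
  have e3 : θ₄ H 3 = fun _ => (0 : ℝ) := by funext r; simp [θ₄]
  have h00 : pd 0 (θ₄ H 0) p = -Real.sin (p 3 / 2) * pd2 0 H (proj p) := by
    rw [e0]; exact pd0_key _ _ _ _ hsin.neg hHd
  have h10 : pd 1 (θ₄ H 0) p = -Real.sin (p 3 / 2) * pd2 1 H (proj p) := by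
    rw [e0]; exact pd1_key _ _ _ _ hsin.neg hHd
  have h20 : pd 2 (θ₄ H 0) p = 0 := by
    rw [e0]; exact pd2_key _ _ _ _ hsin.neg hHd
  have h30 : pd 3 (θ₄ H 0) p = -(Real.cos (p 3 / 2) * (1 / 2)) * H (proj p) := by
    rw [e0]; exact pd3_key _ _ _ _ hsin.neg hHd
  have h01 : pd 0 (θ₄ H 1) p = -Real.cos (p 3 / 2) * pd2 0 H (proj p) := by
    rw [e1]; exact pd0_key _ _ _ _ hcos.neg hHd
  have h11 : pd 1 (θ₄ H 1) p = -Real.cos (p 3 / 2) * pd2 1 H (proj p) := by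
    rw [e1]; exact pd1_key _ _ _ _ hcos.neg hHd
  have h21 : pd 2 (θ₄ H 1) p = 0 := by
    rw [e1]; exact pd2_key _ _ _ _ hcos.neg hHd
  have h31 : pd 3 (θ₄ H 1) p = -(-Real.sin (p 3 / 2) * (1 / 2)) * H (proj p) := by
    rw [e1]; exact pd3_key _ _ _ _ hcos.neg hHd
  have hc2 : ∀ i : Fin 4, pd i (θ₄ H 2) p = 0 := by
    intro i; rw [e2]; exact pd_const i 1 p
  have hc3 : ∀ i : Fin 4, pd i (θ₄ H 3) p = 0 := by
    intro i; rw [e3]; exact pd_const i 0 p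
  have hl2 : l₂ H (proj p) = -((H (proj p))⁻¹ * pd2 1 H (proj p)) := by
    rw [l₂, pd2_log H _ hHd hH0]
  have hn2 : n₂ H (proj p) = (H (proj p))⁻¹ * pd2 0 H (proj p) := by
    rw [n₂, pd2_log H _ hHd hH0]
  have hpd : ∀ i j : Fin 4, pd i (θ₄ H j) p =
      ![![-Real.sin (p 3 / 2) * pd2 0 H (proj p), -Real.cos (p 3 / 2) * pd2 0 H (proj p), 0, 0],
        ![-Real.sin (p 3 / 2) * pd2 1 H (proj p), -Real.cos (p 3 / 2) * pd2 1 H (proj p), 0, 0],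
        ![0, 0, 0, 0],
        ![-(Real.cos (p 3 / 2) * (1 / 2)) * H (proj p),
          -(-Real.sin (p 3 / 2) * (1 / 2)) * H (proj p), 0, 0]] i j := by
    intro i j
    fin_cases i <;> fin_cases j <;>
      first
        | exact h00 | exact h01 | exact h10 | exact h11
        | exact h20 | exact h21 | exact h30 | exact h31
        | exact hc2 _ | exact hc3 _
  fin_cases i <;> fin_cases j <;>
    simp [d1, hpd, w11, θ₁, θ₂, θ₃, hl2, hn2, Matrix.vecHead, Matrix.vecTail] <;>
    field_simp <;> ring
end

section
/- On M = U × {(z,t) : z < 0}, with h, H : U → ℝ positive smooth satisfying Δ ln H = 2h², set l₂ = −(ln H)_y, n₂ = (ln H)_x, α = −2/z, θ₃ = −(z/2)dt + (cos(t/2)H + z l₂)dx + (−sin(t/2)H + z n₂)dy, θ₄ = dz − sin(t/2)H dx − cos(t/2)H dy. Then the 2-form Ω̄ = z²h² dx∧dy − θ₃∧θ₄ is closed: dΩ̄ = 0. -/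
/-- `dx` and `dy` as constant 1-forms. -/
def dxF : Fin 4 → (Fin 4 → ℝ) → ℝ := ![fun _ => 1, fun _ => 0, fun _ => 0, fun _ => 0]
def dyF : Fin 4 → (Fin 4 → ℝ) → ℝ := ![fun _ => 0, fun _ => 1, fun _ => 0, fun _ => 0]

noncomputable def G (H : (Fin 2 → ℝ) → ℝ) (i : Fin 2) : (Fin 2 → ℝ) → ℝ :=
  fun r => pd2 i (fun s => Real.log (H s)) r

noncomputable def C01 (h H : (Fin 2 → ℝ) → ℝ) : (Fin 4 → ℝ) → ℝ := fun x =>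
  x 2 * x 2 * (h (proj x) * h (proj x))
    + Real.cos (x 3 / 2) * H (proj x) * (Real.cos (x 3 / 2) * H (proj x))
    + Real.sin (x 3 / 2) * H (proj x) * (Real.sin (x 3 / 2) * H (proj x))
    - x 2 * (Real.cos (x 3 / 2) * H (proj x) * G H 1 (proj x)
        + Real.sin (x 3 / 2) * H (proj x) * G H 0 (proj x))
noncomputable def C02 (H : (Fin 2 → ℝ) → ℝ) : (Fin 4 → ℝ) → ℝ := fun x =>
  -(Real.cos (x 3 / 2) * H (proj x)) + x 2 * G H 1 (proj x)
noncomputable def C12 (H : (Fin 2 → ℝ) → ℝ) : (Fin 4 → ℝ) → ℝ := fun x =>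
  Real.sin (x 3 / 2) * H (proj x) - x 2 * G H 0 (proj x)
noncomputable def C03 (H : (Fin 2 → ℝ) → ℝ) : (Fin 4 → ℝ) → ℝ := fun x =>
  x 2 * (Real.sin (x 3 / 2) * H (proj x)) * 2⁻¹
noncomputable def C13 (H : (Fin 2 → ℝ) → ℝ) : (Fin 4 → ℝ) → ℝ := fun x =>
  x 2 * (Real.cos (x 3 / 2) * H (proj x)) * 2⁻¹
noncomputable def C23 : (Fin 4 → ℝ) → ℝ := fun x => x 2 * (-2⁻¹ : ℝ)

section Lls
variable (h H : (Fin 2 → ℝ) → ℝ)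

lemma L01 : (fun p : Fin 4 → ℝ =>
    (p 2) ^ 2 * (h (proj p)) ^ 2 * w11 dxF dyF 0 1 p - w11 (θ₃ H) (θ₄ H) 0 1 p)
    = C01 h H := by
  funext p
  simp [w11, θ₃, θ₄, dxF, dyF, Matrix.vecHead, Matrix.vecTail, Function.comp, l₂, n₂, G, C01]
  ring
end Lls
section Lls2
variable (h H : (Fin 2 → ℝ) → ℝ)
lemma L02 : (fun p : Fin 4 → ℝ =>
    (p 2) ^ 2 * (h (proj p)) ^ 2 * w11 dxF dyF 0 2 p - w11 (θ₃ H) (θ₄ H) 0 2 p)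
    = C02 H := by
  funext p; simp [w11, θ₃, θ₄, dxF, dyF, Matrix.vecHead, Matrix.vecTail, Function.comp, l₂, n₂, G, C02]; ring
lemma L03 : (fun p : Fin 4 → ℝ =>
    (p 2) ^ 2 * (h (proj p)) ^ 2 * w11 dxF dyF 0 3 p - w11 (θ₃ H) (θ₄ H) 0 3 p)
    = C03 H := by
  funext p; simp [w11, θ₃, θ₄, dxF, dyF, Matrix.vecHead, Matrix.vecTail, Function.comp, l₂, n₂, G, C03]; ring
lemma L12 : (fun p : Fin 4 → ℝ =>
    (p 2) ^ 2 * (h (proj p)) ^ 2 * w11 dxF dyF 1 2 p - w11 (θ₃ H) (θ₄ H) 1 2 p)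
    = C12 H := by
  funext p; simp [w11, θ₃, θ₄, dxF, dyF, Matrix.vecHead, Matrix.vecTail, Function.comp, l₂, n₂, G, C12]; ring
lemma L13 : (fun p : Fin 4 → ℝ =>
    (p 2) ^ 2 * (h (proj p)) ^ 2 * w11 dxF dyF 1 3 p - w11 (θ₃ H) (θ₄ H) 1 3 p)
    = C13 H := by
  funext p; simp [w11, θ₃, θ₄, dxF, dyF, Matrix.vecHead, Matrix.vecTail, Function.comp, l₂, n₂, G, C13]; ring
lemma L23 : (fun p : Fin 4 → ℝ =>
    (p 2) ^ 2 * (h (proj p)) ^ 2 * w11 dxF dyF 2 3 p - w11 (θ₃ H) (θ₄ H) 2 3 p)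
    = C23 := by
  funext p; simp [w11, θ₃, θ₄, dxF, dyF, Matrix.vecHead, Matrix.vecTail, Function.comp, l₂, n₂, G, C23]; ring
lemma L10 : (fun p : Fin 4 → ℝ =>
    (p 2) ^ 2 * (h (proj p)) ^ 2 * w11 dxF dyF 1 0 p - w11 (θ₃ H) (θ₄ H) 1 0 p)
    = fun p => -C01 h H p := by
  funext p; simp [w11, θ₃, θ₄, dxF, dyF, Matrix.vecHead, Matrix.vecTail, Function.comp, l₂, n₂, G, C01]; ring
lemma L20 : (fun p : Fin 4 → ℝ =>
    (p 2) ^ 2 * (h (proj p)) ^ 2 * w11 dxF dyF 2 0 p - w11 (θ₃ H) (θ₄ H) 2 0 p)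
    = fun p => -C02 H p := by
  funext p; simp [w11, θ₃, θ₄, dxF, dyF, Matrix.vecHead, Matrix.vecTail, Function.comp, l₂, n₂, G, C02]; ring
lemma L30 : (fun p : Fin 4 → ℝ =>
    (p 2) ^ 2 * (h (proj p)) ^ 2 * w11 dxF dyF 3 0 p - w11 (θ₃ H) (θ₄ H) 3 0 p)
    = fun p => -C03 H p := by
  funext p; simp [w11, θ₃, θ₄, dxF, dyF, Matrix.vecHead, Matrix.vecTail, Function.comp, l₂, n₂, G, C03]; ring
lemma L21 : (fun p : Fin 4 → ℝ =>
    (p 2) ^ 2 * (h (proj p)) ^ 2 * w11 dxF dyF 2 1 p - w11 (θ₃ H) (θ₄ H) 2 1 p)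
    = fun p => -C12 H p := by
  funext p; simp [w11, θ₃, θ₄, dxF, dyF, Matrix.vecHead, Matrix.vecTail, Function.comp, l₂, n₂, G, C12]; ring
lemma L31 : (fun p : Fin 4 → ℝ =>
    (p 2) ^ 2 * (h (proj p)) ^ 2 * w11 dxF dyF 3 1 p - w11 (θ₃ H) (θ₄ H) 3 1 p)
    = fun p => -C13 H p := by
  funext p; simp [w11, θ₃, θ₄, dxF, dyF, Matrix.vecHead, Matrix.vecTail, Function.comp, l₂, n₂, G, C13]; ring
lemma L32 : (fun p : Fin 4 → ℝ =>
    (p 2) ^ 2 * (h (proj p)) ^ 2 * w11 dxF dyF 3 2 p - w11 (θ₃ H) (θ₄ H) 3 2 p)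
    = fun p => -C23 p := by
  funext p; simp [w11, θ₃, θ₄, dxF, dyF, Matrix.vecHead, Matrix.vecTail, Function.comp, l₂, n₂, G, C23]; ring
lemma Ldiag (i : Fin 4) : (fun p : Fin 4 → ℝ =>
    (p 2) ^ 2 * (h (proj p)) ^ 2 * w11 dxF dyF i i p - w11 (θ₃ H) (θ₄ H) i i p)
    = fun _ => (0:ℝ) := by
  funext p; simp [w11]
end Lls2

lemma pd_zero (i : Fin 4) (p : Fin 4 → ℝ) : pd i (fun _ => (0:ℝ)) p = 0 := by
  simp [pd]
lemma pd_neg (i : Fin 4) (f : (Fin 4 → ℝ) → ℝ) (p : Fin 4 → ℝ) :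
    pd i (fun x => -f x) p = -pd i f p := by
  simp [pd, fderiv_neg]

lemma proj_eq : proj = ⇑projL := by funext p i; fin_cases i <;> rfl

lemma hasFDerivAt_proj (p : Fin 4 → ℝ) : HasFDerivAt proj projL p := by
  rw [proj_eq]; exact projL.hasFDerivAt

noncomputable def E4 (i : Fin 4) : (Fin 4 → ℝ) →L[ℝ] ℝ := ContinuousLinearMap.proj i

lemma fderiv2_decomp (f : (Fin 2 → ℝ) → ℝ) (q : Fin 2 → ℝ) :
    (fderiv ℝ f q).comp projL = pd2 0 f q • E4 0 + pd2 1 f q • E4 1 := by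
  refine ContinuousLinearMap.ext fun v => ?_
  have hv : projL v = v 0 • (Pi.single (0 : Fin 2) (1:ℝ) : Fin 2 → ℝ)
      + v 1 • (Pi.single (1 : Fin 2) (1:ℝ) : Fin 2 → ℝ) := by
    funext j; fin_cases j <;> simp [projL, Pi.single_apply]
  simp [hv, pd2, E4, smul_eq_mul, mul_comm]

lemma hasFDerivAt_comp_proj' {f : (Fin 2 → ℝ) → ℝ} (p : Fin 4 → ℝ)
    (hf : DifferentiableAt ℝ f (proj p)) :
    HasFDerivAt (fun x => f (proj x))
      (pd2 0 f (proj p) • E4 0 + pd2 1 f (proj p) • E4 1) p := by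
  have := (hf.hasFDerivAt).comp p (hasFDerivAt_proj p)
  exact this.congr_fderiv (fderiv2_decomp f (proj p))

lemma hasFDerivAt_coord (i : Fin 4) (p : Fin 4 → ℝ) :
    HasFDerivAt (fun x : Fin 4 → ℝ => x i) (E4 i) p :=
  (ContinuousLinearMap.proj i : (Fin 4 → ℝ) →L[ℝ] ℝ).hasFDerivAt

lemma hasFDerivAt_half (p : Fin 4 → ℝ) :
    HasFDerivAt (fun x : Fin 4 → ℝ => x 3 / 2) ((2⁻¹ : ℝ) • E4 3) p := by
  simpa [div_eq_mul_inv, smul_smul, mul_comm] using ((hasFDerivAt_coord 3 p).mul_const (2⁻¹:ℝ))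

lemma pd_eq {f : (Fin 4 → ℝ) → ℝ} {F' : (Fin 4 → ℝ) →L[ℝ] ℝ} {p : Fin 4 → ℝ}
    (hf : HasFDerivAt f F' p) (i : Fin 4) : pd i f p = F' (Pi.single i 1) := by
  rw [pd, hf.fderiv]

lemma evalE (r0 r1 r2 r3 : ℝ) (i : Fin 4) :
    (r0 • E4 0 + r1 • E4 1 + r2 • E4 2 + r3 • E4 3) (Pi.single i 1) = ![r0,r1,r2,r3] i := by
  fin_cases i <;>
    simp [E4, Pi.single_apply, Matrix.vecHead, Matrix.vecTail]

section HC
variable {h H : (Fin 2 → ℝ) → ℝ} {p : Fin 4 → ℝ}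
  (dh : DifferentiableAt ℝ h (proj p)) (dH : DifferentiableAt ℝ H (proj p))
  (dG0 : DifferentiableAt ℝ (G H 0) (proj p)) (dG1 : DifferentiableAt ℝ (G H 1) (proj p))

include dh dH dG0 dG1 in
lemma hC01 : HasFDerivAt (C01 h H)
    ((2 * (p 2)^2 * h (proj p) * pd2 0 h (proj p)
        + 2 * (Real.cos (p 3 / 2))^2 * H (proj p) * pd2 0 H (proj p)
        + 2 * (Real.sin (p 3 / 2))^2 * H (proj p) * pd2 0 H (proj p)
        - p 2 * (Real.cos (p 3 / 2) * pd2 0 H (proj p) * G H 1 (proj p)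
            + Real.cos (p 3 / 2) * H (proj p) * pd2 0 (G H 1) (proj p)
            + Real.sin (p 3 / 2) * pd2 0 H (proj p) * G H 0 (proj p)
            + Real.sin (p 3 / 2) * H (proj p) * pd2 0 (G H 0) (proj p))) • E4 0
      + (2 * (p 2)^2 * h (proj p) * pd2 1 h (proj p)
        + 2 * (Real.cos (p 3 / 2))^2 * H (proj p) * pd2 1 H (proj p)
        + 2 * (Real.sin (p 3 / 2))^2 * H (proj p) * pd2 1 H (proj p)
        - p 2 * (Real.cos (p 3 / 2) * pd2 1 H (proj p) * G H 1 (proj p)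
            + Real.cos (p 3 / 2) * H (proj p) * pd2 1 (G H 1) (proj p)
            + Real.sin (p 3 / 2) * pd2 1 H (proj p) * G H 0 (proj p)
            + Real.sin (p 3 / 2) * H (proj p) * pd2 1 (G H 0) (proj p))) • E4 1
      + (2 * p 2 * (h (proj p))^2
        - (Real.cos (p 3 / 2) * H (proj p) * G H 1 (proj p)
            + Real.sin (p 3 / 2) * H (proj p) * G H 0 (proj p))) • E4 2
      + (p 2 * H (proj p) * (Real.sin (p 3 / 2) * G H 1 (proj p)
            - Real.cos (p 3 / 2) * G H 0 (proj p)) / 2) • E4 3) p := by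
  have hz := hasFDerivAt_coord 2 p
  have hc' := (hasFDerivAt_half p).cos
  have hs' := (hasFDerivAt_half p).sin
  have hH' := hasFDerivAt_comp_proj' p dH
  have hh' := hasFDerivAt_comp_proj' p dh
  have hG0' := hasFDerivAt_comp_proj' p dG0
  have hG1' := hasFDerivAt_comp_proj' p dG1
  have main := ((((hz.mul hz).mul (hh'.mul hh')).add
      ((hc'.mul hH').mul (hc'.mul hH'))).add
      ((hs'.mul hH').mul (hs'.mul hH'))).sub
      (hz.mul (((hc'.mul hH').mul hG1').add ((hs'.mul hH').mul hG0')))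
  exact main.congr_fderiv (by
    refine ContinuousLinearMap.ext fun v => ?_
    simp [E4, smul_eq_mul]
    ring)

include dH dG1 in
lemma hC02 : HasFDerivAt (C02 H)
    ((-(Real.cos (p 3 / 2) * pd2 0 H (proj p)) + p 2 * pd2 0 (G H 1) (proj p)) • E4 0
      + (-(Real.cos (p 3 / 2) * pd2 1 H (proj p)) + p 2 * pd2 1 (G H 1) (proj p)) • E4 1
      + (G H 1 (proj p)) • E4 2
      + (Real.sin (p 3 / 2) * H (proj p) / 2) • E4 3) p := by
  have hz := hasFDerivAt_coord 2 p
  have hc' := (hasFDerivAt_half p).cos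
  have hH' := hasFDerivAt_comp_proj' p dH
  have hG1' := hasFDerivAt_comp_proj' p dG1
  have main := ((hc'.mul hH').neg).add (hz.mul hG1')
  exact main.congr_fderiv (by
    refine ContinuousLinearMap.ext fun v => ?_
    simp [E4, smul_eq_mul]
    ring)

include dH dG0 in
lemma hC12 : HasFDerivAt (C12 H)
    ((Real.sin (p 3 / 2) * pd2 0 H (proj p) - p 2 * pd2 0 (G H 0) (proj p)) • E4 0
      + (Real.sin (p 3 / 2) * pd2 1 H (proj p) - p 2 * pd2 1 (G H 0) (proj p)) • E4 1
      + (-G H 0 (proj p)) • E4 2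
      + (Real.cos (p 3 / 2) * H (proj p) / 2) • E4 3) p := by
  have hz := hasFDerivAt_coord 2 p
  have hs' := (hasFDerivAt_half p).sin
  have hH' := hasFDerivAt_comp_proj' p dH
  have hG0' := hasFDerivAt_comp_proj' p dG0
  have main := (hs'.mul hH').sub (hz.mul hG0')
  exact main.congr_fderiv (by
    refine ContinuousLinearMap.ext fun v => ?_
    simp [E4, smul_eq_mul]
    ring)

include dH in
lemma hC03 : HasFDerivAt (C03 H)
    ((p 2 * Real.sin (p 3 / 2) * pd2 0 H (proj p) / 2) • E4 0
      + (p 2 * Real.sin (p 3 / 2) * pd2 1 H (proj p) / 2) • E4 1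
      + (Real.sin (p 3 / 2) * H (proj p) / 2) • E4 2
      + (p 2 * Real.cos (p 3 / 2) * H (proj p) / 4) • E4 3) p := by
  have hz := hasFDerivAt_coord 2 p
  have hs' := (hasFDerivAt_half p).sin
  have hH' := hasFDerivAt_comp_proj' p dH
  have main := (hz.mul (hs'.mul hH')).mul_const (2⁻¹ : ℝ)
  exact main.congr_fderiv (by
    refine ContinuousLinearMap.ext fun v => ?_
    simp [E4, smul_eq_mul]
    ring)

include dH in
lemma hC13 : HasFDerivAt (C13 H)
    ((p 2 * Real.cos (p 3 / 2) * pd2 0 H (proj p) / 2) • E4 0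
      + (p 2 * Real.cos (p 3 / 2) * pd2 1 H (proj p) / 2) • E4 1
      + (Real.cos (p 3 / 2) * H (proj p) / 2) • E4 2
      + (-(p 2 * Real.sin (p 3 / 2) * H (proj p) / 4)) • E4 3) p := by
  have hz := hasFDerivAt_coord 2 p
  have hc' := (hasFDerivAt_half p).cos
  have hH' := hasFDerivAt_comp_proj' p dH
  have main := (hz.mul (hc'.mul hH')).mul_const (2⁻¹ : ℝ)
  exact main.congr_fderiv (by
    refine ContinuousLinearMap.ext fun v => ?_
    simp [E4, smul_eq_mul]
    ring)

lemma hC23 : HasFDerivAt C23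
    ((0:ℝ) • E4 0 + (0:ℝ) • E4 1 + (-2⁻¹ : ℝ) • E4 2 + (0:ℝ) • E4 3) p := by
  have main := (hasFDerivAt_coord 2 p).mul_const (-2⁻¹ : ℝ)
  exact main.congr_fderiv (by
    refine ContinuousLinearMap.ext fun v => ?_
    simp [E4, smul_eq_mul]
    try ring)
end HC

lemma evalE0 (r0 r1 r2 r3 : ℝ) :
    (r0 • E4 0 + r1 • E4 1 + r2 • E4 2 + r3 • E4 3) (Pi.single (0:Fin 4) 1) = r0 := by
  simp [E4, Pi.single_apply]
lemma evalE1 (r0 r1 r2 r3 : ℝ) :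
    (r0 • E4 0 + r1 • E4 1 + r2 • E4 2 + r3 • E4 3) (Pi.single (1:Fin 4) 1) = r1 := by
  simp [E4, Pi.single_apply]
lemma evalE2 (r0 r1 r2 r3 : ℝ) :
    (r0 • E4 0 + r1 • E4 1 + r2 • E4 2 + r3 • E4 3) (Pi.single (2:Fin 4) 1) = r2 := by
  simp [E4, Pi.single_apply]
lemma evalE3 (r0 r1 r2 r3 : ℝ) :
    (r0 • E4 0 + r1 • E4 1 + r2 • E4 2 + r3 • E4 3) (Pi.single (3:Fin 4) 1) = r3 := by
  simp [E4, Pi.single_apply]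


/-- Theorem 1 of the paper: with `Δ ln H = 2h²`, the 2-form
`Ω̄ = z²h² dx∧dy - θ₃∧θ₄` is closed. -/
theorem stmt_10 (U : Set (Fin 2 → ℝ)) (hU : IsOpen U)
    (h H : (Fin 2 → ℝ) → ℝ)
    (hh : ∀ q ∈ U, 0 < h q) (hH : ∀ q ∈ U, 0 < H q)
    (hhs : ContDiffOn ℝ (⊤ : ℕ∞) h U) (hHs : ContDiffOn ℝ (⊤ : ℕ∞) H U)
    (hPDE : ∀ q ∈ U,
      pd2 0 (fun r => pd2 0 (fun s => Real.log (H s)) r) q +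
        pd2 1 (fun r => pd2 1 (fun s => Real.log (H s)) r) q = 2 * h q ^ 2) :
    ∀ p : Fin 4 → ℝ, proj p ∈ U → p 2 < 0 → ∀ i j k : Fin 4,
      d2 (fun i j p =>
          (p 2) ^ 2 * (h (proj p)) ^ 2 * w11 dxF dyF i j p - w11 (θ₃ H) (θ₄ H) i j p)
        i j k p = 0 := by
  intro p hq hz i j k
  have hne : ∀ r ∈ U, H r ≠ 0 := fun r hr => (hH r hr).ne'
  have hLs : ContDiffOn ℝ (⊤ : ℕ∞) (fun s => Real.log (H s)) U := hHs.log hne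
  have hFs : ContDiffOn ℝ (⊤ : ℕ∞) (fderiv ℝ (fun s => Real.log (H s))) U :=
    hLs.fderiv_of_isOpen hU (by simp)
  have hGs : ∀ i2 : Fin 2, ContDiffOn ℝ (⊤ : ℕ∞) (G H i2) U :=
    fun i2 => hFs.clm_apply contDiffOn_const
  have dH : DifferentiableAt ℝ H (proj p) :=
    (hHs.contDiffAt (hU.mem_nhds hq)).differentiableAt (by simp)
  have dh : DifferentiableAt ℝ h (proj p) :=
    (hhs.contDiffAt (hU.mem_nhds hq)).differentiableAt (by simp)
  have dG0 : DifferentiableAt ℝ (G H 0) (proj p) :=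
    ((hGs 0).contDiffAt (hU.mem_nhds hq)).differentiableAt (by simp)
  have dG1 : DifferentiableAt ℝ (G H 1) (proj p) :=
    ((hGs 1).contDiffAt (hU.mem_nhds hq)).differentiableAt (by simp)
  have hlog : HasFDerivAt (fun s => Real.log (H s))
      ((H (proj p))⁻¹ • fderiv ℝ H (proj p)) (proj p) := dH.hasFDerivAt.log (hne _ hq)
  have hb0 : pd2 0 H (proj p) = H (proj p) * G H 0 (proj p) := by
    have hv : G H 0 (proj p) = (H (proj p))⁻¹ * pd2 0 H (proj p) := by
      show pd2 0 (fun s => Real.log (H s)) (proj p) = _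
      rw [pd2, hlog.fderiv]; simp [pd2]
    rw [hv, ← mul_assoc, mul_inv_cancel₀ (hne _ hq), one_mul]
  have hb1 : pd2 1 H (proj p) = H (proj p) * G H 1 (proj p) := by
    have hv : G H 1 (proj p) = (H (proj p))⁻¹ * pd2 1 H (proj p) := by
      show pd2 1 (fun s => Real.log (H s)) (proj p) = _
      rw [pd2, hlog.fderiv]; simp [pd2]
    rw [hv, ← mul_assoc, mul_inv_cancel₀ (hne _ hq), one_mul]
  have hpde : pd2 0 (G H 0) (proj p) + pd2 1 (G H 1) (proj p) = 2 * h (proj p) ^ 2 :=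
    hPDE _ hq
  have hB1 : pd 0 (C12 H) p - pd 1 (C02 H) p + pd 2 (C01 h H) p = 0 := by
    rw [pd_eq (hC12 dH dG0) 0, evalE0, pd_eq (hC02 dH dG1) 1, evalE1,
      pd_eq (hC01 dh dH dG0 dG1) 2, evalE2]
    linear_combination Real.sin (p 3 / 2) * hb0 + Real.cos (p 3 / 2) * hb1 - p 2 * hpde
  have hB2 : pd 0 (C13 H) p - pd 1 (C03 H) p + pd 3 (C01 h H) p = 0 := by
    rw [pd_eq (hC13 dH) 0, evalE0, pd_eq (hC03 dH) 1, evalE1,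
      pd_eq (hC01 dh dH dG0 dG1) 3, evalE3]
    linear_combination (p 2 * Real.cos (p 3 / 2) / 2) * hb0
      - (p 2 * Real.sin (p 3 / 2) / 2) * hb1
  have hB3 : pd 0 C23 p - pd 2 (C03 H) p + pd 3 (C02 H) p = 0 := by
    rw [pd_eq hC23 0, evalE0, pd_eq (hC03 dH) 2, evalE2, pd_eq (hC02 dH dG1) 3, evalE3]
    ring
  have hB4 : pd 1 C23 p - pd 2 (C13 H) p + pd 3 (C12 H) p = 0 := by
    rw [pd_eq hC23 1, evalE1, pd_eq (hC13 dH) 2, evalE2, pd_eq (hC12 dH dG0) 3, evalE3]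
    ring
  have hfin : ∀ m : Fin 4, m = 0 ∨ m = 1 ∨ m = 2 ∨ m = 3 := by decide
  rcases hfin i with rfl|rfl|rfl|rfl <;> rcases hfin j with rfl|rfl|rfl|rfl <;>
    rcases hfin k with rfl|rfl|rfl|rfl <;>
    simp only [d2, L01 h H, L02 h H, L03 h H, L12 h H, L13 h H, L23 h H,
      L10 h H, L20 h H, L30 h H, L21 h H, L31 h H, L32 h H, Ldiag h H,
      pd_neg, pd_zero] <;>
    first
      | ring1
      | linarith [hB1, hB2, hB3, hB4]
end
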